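/- For every R > 0 there exists a constant K = K(R) > 0 such that for all ε ∈ (0,1] and all (x,w) ∈ ℝ² with |x| ≤ R and |w| ≤ R, the change of the quantity C along one step of the map T₂ satisfies |C(T₂(x,w)) − C(x,w) − (ε³/4)·x·w·(1 + 2w² − 4x² + 3x⁴)| ≤ K ε⁴. In particular, C is an adiabatic invariant of T₂: |C(T₂(x,w)) − C(x,w)| = O(ε³) uniformly on compact sets. -/
import Mathlib
set_option maxHeartbeats 2000000

/-- The nonlinear drift `f(ξ) = ξ − ξ³`. -/
def fdrift (ξ : ℝ) : ℝ := ξ - ξ^3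

/-- The symmetric twist map `T₂(x,w) = (x′,w′)`, `x′ = x + εw − (ε²/2)f(x)`,
`w′ = w − (ε/2)(f(x) + f(x′))`. -/
noncomputable def T2 (ε : ℝ) (p : ℝ × ℝ) : ℝ × ℝ :=
  (p.1 + ε * p.2 - ε^2/2 * fdrift p.1,
   p.2 - ε/2 * (fdrift p.1 + fdrift (p.1 + ε * p.2 - ε^2/2 * fdrift p.1)))

/-- The quantity `C(x,w) = (x² + w²)/2 − x⁴/4`, conserved in the continuum limit. -/
noncomputable def CC (p : ℝ × ℝ) : ℝ := (p.1^2 + p.2^2)/2 - p.1^4/4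

/-- The involution `S₁(x,w) = (−x,w)`. -/
def S1 (p : ℝ × ℝ) : ℝ × ℝ := (-p.1, p.2)

/-- The involution `S₂(x,w) = (x,−w)`. -/
def S2 (p : ℝ × ℝ) : ℝ × ℝ := (p.1, -p.2)

noncomputable def Qc0 (x w e : ℝ) : ℝ := (1/8) * w^2 + (1/4) * w^4 - (1/4) * w^4 * e^2 + (1/8) * w^6 * e^4 - (1/8) * x * w * e - (3/2) * x * w^3 * e + (1/2) * x * w^3 * e^3 + (3/4) * x * w^5 * e^3 - (3/8) * x * w^5 * e^5 - (1/8) * x^2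

noncomputable def Qc1 (x w e : ℝ) : ℝ := (1/32) * x^2 * e^2 - (9/4) * x^2 * w^2 + (15/8) * x^2 * w^2 * e^2 - (3/8) * x^2 * w^2 * e^4 + (15/8) * x^2 * w^4 * e^2 - (15/8) * x^2 * w^4 * e^4 + (15/32) * x^2 * w^4 * e^6 + (2) * x^3 * w * e - (7/8) * x^3 * w * e^3 + (1/8) * x^3 * w * e^5

noncomputable def Qc2 (x w e : ℝ) : ℝ := (3) * x^3 * w^3 * e - (17/4) * x^3 * w^3 * e^3 + (15/8) * x^3 * w^3 * e^5 - (5/16) * x^3 * w^3 * e^7 + (3/8) * x^3 * w^5 * e^5 + (5/8) * x^4 - (1/2) * x^4 * e^2 + (9/64) * x^4 * e^4 - (1/64) * x^4 * e^6 + (21/8) * x^4 * w^2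

noncomputable def Qc3 (x w e : ℝ) : ℝ := -(6) * x^4 * w^2 * e^2 + (57/16) * x^4 * w^2 * e^4 - (15/16) * x^4 * w^2 * e^6 + (15/128) * x^4 * w^2 * e^8 + (15/8) * x^4 * w^4 * e^4 - (15/16) * x^4 * w^4 * e^6 - (33/8) * x^5 * w * e + (15/4) * x^5 * w * e^3 - (21/16) * x^5 * w * e^5 + (15/64) * x^5 * w * e^7

noncomputable def Qc4 (x w e : ℝ) : ℝ := -(3/128) * x^5 * w * e^9 + (15/4) * x^5 * w^3 * e^3 - (15/4) * x^5 * w^3 * e^5 + (15/16) * x^5 * w^3 * e^7 - (7/8) * x^6 + (23/16) * x^6 * e^2 - (3/4) * x^6 * e^4 + (23/128) * x^6 * e^6 - (3/128) * x^6 * e^8 + (1/512) * x^6 * e^10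

noncomputable def Qc5 (x w e : ℝ) : ℝ := (33/8) * x^6 * w^2 * e^2 - (6) * x^6 * w^2 * e^4 + (45/16) * x^6 * w^2 * e^6 - (15/32) * x^6 * w^2 * e^8 + (15/32) * x^6 * w^4 * e^6 + (9/4) * x^7 * w * e - (39/8) * x^7 * w * e^3 + (51/16) * x^7 * w * e^5 - (15/16) * x^7 * w * e^7 + (15/128) * x^7 * w * e^9

noncomputable def Qc6 (x w e : ℝ) : ℝ := (15/8) * x^7 * w^3 * e^5 - (15/16) * x^7 * w^3 * e^7 + (3/8) * x^8 - (3/2) * x^8 * e^2 + (45/32) * x^8 * e^4 - (9/16) * x^8 * e^6 + (15/128) * x^8 * e^8 - (3/256) * x^8 * e^10 + (45/16) * x^8 * w^2 * e^4 - (45/16) * x^8 * w^2 * e^6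

noncomputable def Qc7 (x w e : ℝ) : ℝ := (45/64) * x^8 * w^2 * e^8 + (2) * x^9 * w * e^3 - (47/16) * x^9 * w * e^5 + (45/32) * x^9 * w * e^7 - (15/64) * x^9 * w * e^9 + (5/16) * x^9 * w^3 * e^7 + (17/32) * x^10 * e^2 - (9/8) * x^10 * e^4 + (49/64) * x^10 * e^6 - (15/64) * x^10 * e^8

noncomputable def Qc8 (x w e : ℝ) : ℝ := (15/512) * x^10 * e^10 + (15/16) * x^10 * w^2 * e^6 - (15/32) * x^10 * w^2 * e^8 + (15/16) * x^11 * w * e^5 - (15/16) * x^11 * w * e^7 + (15/64) * x^11 * w * e^9 + (21/64) * x^12 * e^4 - (31/64) * x^12 * e^6 + (15/64) * x^12 * e^8 - (5/128) * x^12 * e^10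

noncomputable def Qc9 (x w e : ℝ) : ℝ := (15/128) * x^12 * w^2 * e^8 + (15/64) * x^13 * w * e^7 - (15/128) * x^13 * w * e^9 + (15/128) * x^14 * e^6 - (15/128) * x^14 * e^8 + (15/512) * x^14 * e^10 + (3/128) * x^15 * w * e^9 + (3/128) * x^16 * e^8 - (3/256) * x^16 * e^10 + (1/512) * x^18 * e^10

noncomputable def Qpoly (x w e : ℝ) : ℝ := Qc0 x w e + Qc1 x w e + Qc2 x w e + Qc3 x w e + Qc4 x w e + Qc5 x w e + Qc6 x w e + Qc7 x w e + Qc8 x w e + Qc9 x w e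

lemma hQcont : Continuous (fun p : ℝ × ℝ × ℝ => Qpoly p.1 p.2.1 p.2.2) := by
  have h0 : Continuous (fun p : ℝ × ℝ × ℝ => Qc0 p.1 p.2.1 p.2.2) := by
    unfold Qc0; fun_prop
  have h1 : Continuous (fun p : ℝ × ℝ × ℝ => Qc1 p.1 p.2.1 p.2.2) := by
    unfold Qc1; fun_prop
  have h2 : Continuous (fun p : ℝ × ℝ × ℝ => Qc2 p.1 p.2.1 p.2.2) := by
    unfold Qc2; fun_prop
  have h3 : Continuous (fun p : ℝ × ℝ × ℝ => Qc3 p.1 p.2.1 p.2.2) := by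
    unfold Qc3; fun_prop
  have h4 : Continuous (fun p : ℝ × ℝ × ℝ => Qc4 p.1 p.2.1 p.2.2) := by
    unfold Qc4; fun_prop
  have h5 : Continuous (fun p : ℝ × ℝ × ℝ => Qc5 p.1 p.2.1 p.2.2) := by
    unfold Qc5; fun_prop
  have h6 : Continuous (fun p : ℝ × ℝ × ℝ => Qc6 p.1 p.2.1 p.2.2) := by
    unfold Qc6; fun_prop
  have h7 : Continuous (fun p : ℝ × ℝ × ℝ => Qc7 p.1 p.2.1 p.2.2) := by
    unfold Qc7; fun_prop
  have h8 : Continuous (fun p : ℝ × ℝ × ℝ => Qc8 p.1 p.2.1 p.2.2) := by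
    unfold Qc8; fun_prop
  have h9 : Continuous (fun p : ℝ × ℝ × ℝ => Qc9 p.1 p.2.1 p.2.2) := by
    unfold Qc9; fun_prop
  have : (fun p : ℝ × ℝ × ℝ => Qpoly p.1 p.2.1 p.2.2)
      = fun p => Qc0 p.1 p.2.1 p.2.2 + Qc1 p.1 p.2.1 p.2.2 + Qc2 p.1 p.2.1 p.2.2
        + Qc3 p.1 p.2.1 p.2.2 + Qc4 p.1 p.2.1 p.2.2 + Qc5 p.1 p.2.1 p.2.2
        + Qc6 p.1 p.2.1 p.2.2 + Qc7 p.1 p.2.1 p.2.2 + Qc8 p.1 p.2.1 p.2.2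
        + Qc9 p.1 p.2.1 p.2.2 := by
    funext p; simp only [Qpoly]
  rw [this]
  exact ((((((((h0.add h1).add h2).add h3).add h4).add h5).add h6).add h7).add h8).add h9

lemma key_identity (ε x w : ℝ) :
    CC (T2 ε (x, w)) - CC (x, w)
      - ε^3/4 * (x * w * (1 + 2*w^2 - 4*x^2 + 3*x^4)) = ε^4 * Qpoly x w ε := by
  simp only [CC, T2, fdrift, Qpoly, Qc0, Qc1, Qc2, Qc3, Qc4, Qc5, Qc6, Qc7, Qc8, Qc9]
  ring

attribute [irreducible] Qpoly

/-- for every `R > 0` there is `K > 0` such that for all `ε ∈ (0,1]` and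
all `(x,w)` with `|x| ≤ R`, `|w| ≤ R`,
`|C(T₂(x,w)) − C(x,w) − (ε³/4)·x·w·(1 + 2w² − 4x² + 3x⁴)| ≤ K ε⁴`; in particular `C` is
an adiabatic invariant of `T₂`, changing only by `O(ε³)` per step, uniformly on compact
sets. -/
theorem statement6 (R : ℝ) (hR : 0 < R) :
    ∃ K : ℝ, 0 < K ∧
      ∀ ε : ℝ, 0 < ε → ε ≤ 1 →
        ∀ x w : ℝ, |x| ≤ R → |w| ≤ R →
          |CC (T2 ε (x, w)) - CC (x, w)
              - ε^3/4 * (x * w * (1 + 2*w^2 - 4*x^2 + 3*x^4))| ≤ K * ε^4 := by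
  have hcomp : IsCompact (Set.Icc (-R) R ×ˢ Set.Icc (-R) R ×ˢ Set.Icc (0:ℝ) 1) :=
    isCompact_Icc.prod (isCompact_Icc.prod isCompact_Icc)
  have hne : (Set.Icc (-R) R ×ˢ Set.Icc (-R) R ×ˢ Set.Icc (0:ℝ) 1).Nonempty :=
    ⟨(0, 0, 0), ⟨⟨neg_nonpos.mpr hR.le, hR.le⟩, ⟨neg_nonpos.mpr hR.le, hR.le⟩,
      le_refl 0, zero_le_one⟩⟩
  obtain ⟨z, _, hmax⟩ := hcomp.exists_isMaxOn (f := fun p : ℝ × ℝ × ℝ =>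
      |Qpoly p.1 p.2.1 p.2.2|) hne (hQcont.abs.continuousOn)
  set B := |Qpoly z.1 z.2.1 z.2.2| with hB
  have hB0 : 0 ≤ B := abs_nonneg _
  refine ⟨B + 1, by linarith, ?_⟩
  intro ε hε hε1 x w hx hw
  rw [key_identity, abs_mul, abs_pow, abs_of_pos hε]
  have hQ : |Qpoly x w ε| ≤ B :=
    hmax (show (x, w, ε) ∈ Set.Icc (-R) R ×ˢ Set.Icc (-R) R ×ˢ Set.Icc (0:ℝ) 1 from
      ⟨⟨(abs_le.mp hx).1, (abs_le.mp hx).2⟩,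
      ⟨(abs_le.mp hw).1, (abs_le.mp hw).2⟩, hε.le, hε1⟩)
  have h4 : (0:ℝ) ≤ ε ^ 4 := pow_nonneg hε.le 4
  calc ε ^ 4 * |Qpoly x w ε| ≤ ε ^ 4 * (B + 1) :=
        mul_le_mul_of_nonneg_left (hQ.trans (by linarith)) h4
    _ = (B + 1) * ε ^ 4 := mul_comm _ _
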